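/- arXiv:2304.00444 — 3 statements merged into one kernel-verified Lean document; each statement's English description precedes it below -/
import Mathlib

section
/- Let X be a real-valued random variable with E[X] = 0 such that P(|X| ≥ t) ≤ 2·exp(-t²/(2σ²)) for all t ≥ 0, where σ > 0. Then for any λ ∈ [0, 1/(4σ²)], E[exp(λ X²)] ≤ 2·exp(4λσ²) - 1 ≤ exp(8λσ²). -/
open MeasureTheory Real Set

theorem stmt0 {Ω : Type*} [MeasurableSpace Ω] (μ : Measure Ω) [IsProbabilityMeasure μ]
    (X : Ω → ℝ) (hX : Measurable X) (hmean : ∫ ω, X ω ∂μ = 0)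
    (σ : ℝ) (hσ : 0 < σ)
    (htail : ∀ t : ℝ, 0 ≤ t → μ {ω | t ≤ |X ω|} ≤ ENNReal.ofReal (2 * Real.exp (-t ^ 2 / (2 * σ ^ 2))))
    (l : ℝ) (hl : l ∈ Set.Icc 0 (1 / (4 * σ ^ 2))) :
    (∫ ω, Real.exp (l * X ω ^ 2) ∂μ) ≤ 2 * Real.exp (4 * l * σ ^ 2) - 1 ∧
    2 * Real.exp (4 * l * σ ^ 2) - 1 ≤ Real.exp (8 * l * σ ^ 2) := by
  obtain ⟨hl0, hl1⟩ := hl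
  constructor
  · -- main bound
    rcases eq_or_lt_of_le hl0 with h0 | hlpos
    · simp [← h0]; norm_num
    -- l > 0 case
    set c : ℝ := 1 / (2 * l * σ ^ 2) with hc_def
    have hσ2 : 0 < σ ^ 2 := by positivity
    have hcpos : 0 < c := by positivity
    have hl1' : l * (4 * σ ^ 2) ≤ 1 := by
      rw [le_div_iff₀ (by positivity)] at hl1; linarith
    have hc2 : 2 ≤ c := by
      rw [hc_def, le_div_iff₀ (by positivity)]
      nlinarith
    have hcl : 2 / c = 4 * l * σ ^ 2 := by
      rw [hc_def]
      field_simp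
      ring
    set f : Ω → ℝ := fun ω => Real.exp (l * X ω ^ 2) with hf_def
    have hfm : Measurable f := Real.measurable_exp.comp ((hX.pow_const 2).const_mul l)
    have hfnn : ∀ ω, 0 ≤ f ω := fun ω => (Real.exp_pos _).le
    have step1 : ∫ ω, f ω ∂μ = (∫⁻ ω, ENNReal.ofReal (f ω) ∂μ).toReal :=
      integral_eq_lintegral_of_nonneg_ae (ae_of_all μ hfnn) hfm.aestronglyMeasurable
    have step2 : ∫⁻ ω, ENNReal.ofReal (f ω) ∂μ = ∫⁻ t in Ioi (0:ℝ), μ {ω | t < f ω} :=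
      lintegral_eq_lintegral_meas_lt μ (ae_of_all μ hfnn) hfm.aemeasurable
    have hsplit : (∫⁻ t in Ioi (0:ℝ), μ {ω | t < f ω}) =
        (∫⁻ t in Ioc (0:ℝ) 1, μ {ω | t < f ω}) + ∫⁻ t in Ioi (1:ℝ), μ {ω | t < f ω} := by
      rw [← lintegral_union measurableSet_Ioi (Set.Ioc_disjoint_Ioi le_rfl),
        Set.Ioc_union_Ioi_eq_Ioi (by norm_num : (0:ℝ) ≤ 1)]
    have piece1 : (∫⁻ t in Ioc (0:ℝ) 1, μ {ω | t < f ω}) ≤ 1 := by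
      calc (∫⁻ t in Ioc (0:ℝ) 1, μ {ω | t < f ω}) ≤ ∫⁻ _ in Ioc (0:ℝ) 1, 1 := by
            exact setLIntegral_mono measurable_const fun t _ => prob_le_one
        _ = 1 := by simp [Real.volume_Ioc]
    have piece2 : (∫⁻ t in Ioi (1:ℝ), μ {ω | t < f ω}) ≤
        ∫⁻ t in Ioi (1:ℝ), ENNReal.ofReal (2 * t ^ (-c)) := by
      apply setLIntegral_mono (by fun_prop)
      intro t ht
      simp only [Set.mem_Ioi] at ht
      have htpos : (0:ℝ) < t := by linarith
      have hlogt : 0 ≤ Real.log t := Real.log_nonneg ht.le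
      have hsub : {ω | t < f ω} ⊆ {ω | Real.sqrt (Real.log t / l) ≤ |X ω|} := by
        intro ω hω
        simp only [Set.mem_setOf_eq] at hω ⊢
        have h1 : Real.log t < l * X ω ^ 2 := by
          calc Real.log t < Real.log (f ω) := Real.log_lt_log htpos hω
            _ = l * X ω ^ 2 := Real.log_exp _
        have h2 : Real.log t / l < X ω ^ 2 := by
          rw [div_lt_iff₀ hlpos]; linarith [mul_comm l (X ω ^ 2)]
        calc Real.sqrt (Real.log t / l) ≤ Real.sqrt (X ω ^ 2) :=
              Real.sqrt_le_sqrt h2.le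
          _ = |X ω| := Real.sqrt_sq_eq_abs _
      calc μ {ω | t < f ω} ≤ μ {ω | Real.sqrt (Real.log t / l) ≤ |X ω|} := measure_mono hsub
        _ ≤ ENNReal.ofReal (2 * Real.exp (-(Real.sqrt (Real.log t / l)) ^ 2 / (2 * σ ^ 2))) :=
            htail _ (Real.sqrt_nonneg _)
        _ = ENNReal.ofReal (2 * t ^ (-c)) := by
            have hs : (Real.sqrt (Real.log t / l)) ^ 2 = Real.log t / l :=
              Real.sq_sqrt (div_nonneg hlogt hlpos.le)
            have key : -(Real.log t / l) / (2 * σ ^ 2) =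
                Real.log t * -(1 / (2 * l * σ ^ 2)) := by
              rw [neg_div, div_div, mul_neg, mul_one_div,
                show l * (2 * σ ^ 2) = 2 * l * σ ^ 2 by ring]
            rw [hs, Real.rpow_def_of_pos htpos, hc_def, key]
    have hint : IntegrableOn (fun t : ℝ => 2 * t ^ (-c)) (Ioi (1:ℝ)) :=
      (integrableOn_Ioi_rpow_of_lt (by linarith) one_pos).const_mul 2
    have hval : (∫ t in Ioi (1:ℝ), 2 * t ^ (-c)) = 2 / (c - 1) := by
      rw [MeasureTheory.integral_const_mul, integral_Ioi_rpow_of_lt (by linarith) one_pos,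
        Real.one_rpow, show -c + 1 = -(c - 1) by ring, div_neg, neg_div, neg_neg,
        mul_one_div]
    have h2c : (0:ℝ) ≤ 2 / (c - 1) := div_nonneg (by norm_num) (by linarith)
    have piece2' : (∫⁻ t in Ioi (1:ℝ), ENNReal.ofReal (2 * t ^ (-c))) =
        ENNReal.ofReal (2 / (c - 1)) := by
      rw [← MeasureTheory.ofReal_integral_eq_lintegral_ofReal hint
        ((ae_restrict_iff' measurableSet_Ioi).2 (ae_of_all _ fun t ht => by
          have : (0:ℝ) < t := lt_trans one_pos ht
          positivity)), hval]
    have total : (∫⁻ ω, ENNReal.ofReal (f ω) ∂μ) ≤ ENNReal.ofReal (1 + 2 / (c - 1)) := by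
      rw [step2, hsplit]
      calc _ ≤ 1 + ENNReal.ofReal (2 / (c - 1)) :=
            add_le_add piece1 (piece2.trans_eq piece2')
        _ = ENNReal.ofReal (1 + 2 / (c - 1)) := by
            rw [ENNReal.ofReal_add (by norm_num) h2c]
            simp
    have hreal : (∫ ω, f ω ∂μ) ≤ 1 + 2 / (c - 1) := by
      rw [step1]
      exact ENNReal.toReal_le_of_le_ofReal (by linarith) total
    -- final arithmetic
    have hexp : 1 + 2 / c ≤ Real.exp (2 / c) := by
      linarith [Real.add_one_le_exp (2 / c)]
    rw [← hcl]
    have h1 : 2 / (c - 1) ≤ 4 / c := by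
      rw [div_le_div_iff₀ (by linarith) hcpos]
      nlinarith
    have h4 : 4 / c = 2 * (2 / c) := by ring
    calc (∫ ω, f ω ∂μ) ≤ 1 + 2 / (c - 1) := hreal
      _ ≤ 1 + 4 / c := by linarith
      _ ≤ 2 * Real.exp (2 / c) - 1 := by linarith
  · rw [show (8:ℝ) * l * σ^2 = 4*l*σ^2 + 4*l*σ^2 by ring, Real.exp_add]
    nlinarith [sq_nonneg (Real.exp (4*l*σ^2) - 1)]
end

section
/- Let A be the 2×2 real matrix [[θ, -(1-θ)λ/μ_x], [(1-θ)θ²λ/μ_y, θ - (1-θ)²(1+θ)κ²]], where κ = λ/√(μ_x μ_y), μ_x, μ_y > 0, λ ≠ 0, and θ ∈ ((√(1+κ²)-1)/|κ|, 1). Then the discriminant Δ = (1-θ)⁴(1+θ)²κ⁴ - 4θ²(1-θ)²κ² of the characteristic polynomial of A is strictly negative, so A has two complex conjugate eigenvalues ν₁, ν₂ with ν₁ν₂ = θ² - θ(1-θ)²κ² and ν₁+ν₂ = 2θ - (1-θ)²(1+θ)κ². -/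
open Matrix Polynomial

lemma charpoly_fin_two' (M : Matrix (Fin 2) (Fin 2) ℂ) (a b : ℂ)
    (h1 : M 0 0 + M 1 1 = a + b) (h2 : M 0 0 * M 1 1 - M 0 1 * M 1 0 = a * b) :
    M.charpoly = (X - C a) * (X - C b) := by
  rw [Matrix.charpoly, Matrix.det_fin_two]
  simp only [charmatrix_apply_eq, charmatrix_apply_ne _ (0 : Fin 2) 1 (by decide),
    charmatrix_apply_ne _ (1 : Fin 2) 0 (by decide)]
  have e1 : C (M 0 0) + C (M 1 1) = C a + C b := by
    rw [← C_add, ← C_add, h1]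
  have e2 : C (M 0 0) * C (M 1 1) - C (M 0 1) * C (M 1 0) = C a * C b := by
    rw [← C_mul, ← C_mul, ← C_mul, ← C_sub, h2]
  linear_combination (-X) * e1 + e2

theorem stmt9 (θ l μx μy : ℝ) (hμx : 0 < μx) (hμy : 0 < μy) (hl : l ≠ 0)
    (κ : ℝ) (hκ : κ = l / Real.sqrt (μx * μy))
    (hθ1 : (Real.sqrt (1 + κ ^ 2) - 1) / |κ| < θ) (hθ2 : θ < 1) :
    (1 - θ) ^ 4 * (1 + θ) ^ 2 * κ ^ 4 - 4 * θ ^ 2 * (1 - θ) ^ 2 * κ ^ 2 < 0 ∧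
    ∃ ν₁ ν₂ : ℂ, ν₂ = starRingEnd ℂ ν₁ ∧ ν₁ ≠ ν₂ ∧
      Matrix.charpoly
        ((!![θ, -(1 - θ) * l / μx;
            (1 - θ) * θ ^ 2 * l / μy, θ - (1 - θ) ^ 2 * (1 + θ) * κ ^ 2] :
          Matrix (Fin 2) (Fin 2) ℝ).map Complex.ofReal) =
        (X - C ν₁) * (X - C ν₂) ∧
      ν₁ * ν₂ = ((θ ^ 2 - θ * (1 - θ) ^ 2 * κ ^ 2 : ℝ) : ℂ) ∧
      ν₁ + ν₂ = ((2 * θ - (1 - θ) ^ 2 * (1 + θ) * κ ^ 2 : ℝ) : ℂ) := by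
  have hsq : Real.sqrt (μx * μy) ^ 2 = μx * μy := Real.sq_sqrt (by positivity)
  have hsqp : 0 < Real.sqrt (μx * μy) := Real.sqrt_pos.mpr (by positivity)
  have hκ0 : κ ≠ 0 := by
    rw [hκ]; exact div_ne_zero hl hsqp.ne'
  have hκ2 : κ ^ 2 = l ^ 2 / (μx * μy) := by
    rw [hκ, div_pow, hsq]
  have habs : 0 < |κ| := abs_pos.mpr hκ0
  have hκsq : 0 < κ ^ 2 := by nlinarith [sq_abs κ]
  have hs : Real.sqrt (1 + κ ^ 2) ^ 2 = 1 + κ ^ 2 := Real.sq_sqrt (by positivity)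
  have h1 : Real.sqrt (1 + κ ^ 2) - 1 < θ * |κ| := by
    have := (div_lt_iff₀ habs).mp hθ1; linarith
  have hs1 : 1 ≤ Real.sqrt (1 + κ ^ 2) := by
    nlinarith [Real.sqrt_nonneg (1 + κ ^ 2)]
  have hθ0 : 0 < θ := by
    have h0 : 0 ≤ (Real.sqrt (1 + κ ^ 2) - 1) / |κ| :=
      div_nonneg (by linarith) habs.le
    linarith
  have habs2 : |κ| ^ 2 = κ ^ 2 := sq_abs κ
  have hkey : (1 - θ ^ 2) * |κ| < 2 * θ := by
    nlinarith [Real.sqrt_nonneg (1 + κ ^ 2)]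
  have hp : 0 < (1 - θ) ^ 2 * κ ^ 2 := by
    have h1θ : (0:ℝ) < (1 - θ) ^ 2 := pow_pos (by linarith) 2
    exact mul_pos h1θ hκsq
  have h4 : ((1 - θ ^ 2) * |κ|) ^ 2 < (2 * θ) ^ 2 := by
    have hnn : 0 ≤ (1 - θ ^ 2) * |κ| := by nlinarith
    nlinarith
  have h4' : (1 - θ ^ 2) ^ 2 * κ ^ 2 < (2 * θ) ^ 2 := by
    rw [← habs2]; nlinarith [h4]
  have hΔ : (1 - θ) ^ 4 * (1 + θ) ^ 2 * κ ^ 4 - 4 * θ ^ 2 * (1 - θ) ^ 2 * κ ^ 2 < 0 := by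
    have hpos := mul_pos hp (show (0:ℝ) < (2 * θ) ^ 2 - (1 - θ ^ 2) ^ 2 * κ ^ 2 by linarith)
    have hid : (1 - θ) ^ 4 * (1 + θ) ^ 2 * κ ^ 4 - 4 * θ ^ 2 * (1 - θ) ^ 2 * κ ^ 2 =
        -((1 - θ) ^ 2 * κ ^ 2 * ((2 * θ) ^ 2 - (1 - θ ^ 2) ^ 2 * κ ^ 2)) := by ring
    rw [hid]; linarith
  refine ⟨hΔ, ?_⟩
  have hT : (2 * θ - (1 - θ) ^ 2 * (1 + θ) * κ ^ 2 : ℝ) =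
      2 * θ - (1 - θ) ^ 2 * (1 + θ) * κ ^ 2 := rfl
  obtain ⟨T, hTdef⟩ : ∃ t : ℝ, t = 2 * θ - (1 - θ) ^ 2 * (1 + θ) * κ ^ 2 := ⟨_, rfl⟩
  obtain ⟨D, hDdef⟩ : ∃ d : ℝ, d = θ ^ 2 - θ * (1 - θ) ^ 2 * κ ^ 2 := ⟨_, rfl⟩
  rw [← hTdef, ← hDdef]
  have hdpos : 0 < 4 * D - T ^ 2 := by
    have hid2 : T ^ 2 - 4 * D =
        (1 - θ) ^ 4 * (1 + θ) ^ 2 * κ ^ 4 - 4 * θ ^ 2 * (1 - θ) ^ 2 * κ ^ 2 := by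
      rw [hTdef, hDdef]; ring
    linarith
  obtain ⟨r, hrdef⟩ : ∃ t : ℝ, t = Real.sqrt (4 * D - T ^ 2) := ⟨_, rfl⟩
  have hrpos : 0 < r := hrdef ▸ Real.sqrt_pos.mpr hdpos
  have hr2 : r ^ 2 = 4 * D - T ^ 2 := by rw [hrdef]; exact Real.sq_sqrt hdpos.le
  obtain ⟨ν₁, hν₁⟩ : ∃ z : ℂ, z = ((T / 2 : ℝ) + (r / 2 : ℝ) * Complex.I : ℂ) := ⟨_, rfl⟩
  have hconj : (starRingEnd ℂ) ν₁ = (T / 2 : ℝ) - (r / 2 : ℝ) * Complex.I := by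
    rw [hν₁, map_add, _root_.map_mul, Complex.conj_ofReal, Complex.conj_ofReal,
      Complex.conj_I]
    ring
  obtain ⟨ν₂, hν₂⟩ : ∃ z : ℂ, z = ((T / 2 : ℝ) - (r / 2 : ℝ) * Complex.I : ℂ) := ⟨_, rfl⟩
  rw [← hν₂] at hconj
  have hsum : ν₁ + ν₂ = (T : ℂ) := by
    rw [hν₁, hν₂]; push_cast; ring
  have hprod : ν₁ * ν₂ = (D : ℂ) := by
    rw [← hconj, Complex.mul_conj, hν₁, Complex.normSq_add_mul_I]
    norm_cast
    rw [div_pow, div_pow, hr2]; ring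
  refine ⟨ν₁, ν₂, hconj.symm, ?_, ?_, hprod, hsum⟩
  · intro h
    have him := congrArg Complex.im h
    rw [hν₁, hν₂] at him
    simp [Complex.add_im, Complex.sub_im, Complex.mul_im, Complex.ofReal_im,
      Complex.ofReal_re, Complex.I_im, Complex.I_re] at him
    linarith
  · apply charpoly_fin_two'
    · rw [hsum, hTdef]
      simp [Matrix.map_apply]
      ring
    · rw [hprod]
      have hreal : θ * (θ - (1 - θ) ^ 2 * (1 + θ) * κ ^ 2)
          - -(1 - θ) * l / μx * ((1 - θ) * θ ^ 2 * l / μy) = D := by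
        rw [hDdef, hκ2]
        field_simp
        ring
      have hstep : ((!![θ, -(1 - θ) * l / μx;
            (1 - θ) * θ ^ 2 * l / μy, θ - (1 - θ) ^ 2 * (1 + θ) * κ ^ 2] :
          Matrix (Fin 2) (Fin 2) ℝ).map Complex.ofReal) 0 0 *
          ((!![θ, -(1 - θ) * l / μx;
            (1 - θ) * θ ^ 2 * l / μy, θ - (1 - θ) ^ 2 * (1 + θ) * κ ^ 2] :
          Matrix (Fin 2) (Fin 2) ℝ).map Complex.ofReal) 1 1 -
          ((!![θ, -(1 - θ) * l / μx;
            (1 - θ) * θ ^ 2 * l / μy, θ - (1 - θ) ^ 2 * (1 + θ) * κ ^ 2] :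
          Matrix (Fin 2) (Fin 2) ℝ).map Complex.ofReal) 0 1 *
          ((!![θ, -(1 - θ) * l / μx;
            (1 - θ) * θ ^ 2 * l / μy, θ - (1 - θ) ^ 2 * (1 + θ) * κ ^ 2] :
          Matrix (Fin 2) (Fin 2) ℝ).map Complex.ofReal) 1 0 =
          ((θ * (θ - (1 - θ) ^ 2 * (1 + θ) * κ ^ 2)
          - -(1 - θ) * l / μx * ((1 - θ) * θ ^ 2 * l / μy) : ℝ) : ℂ) := by
        simp [Matrix.map_apply]
      rw [hstep, hreal]
end

section
/- With the matrix A of the previous setting (entries [[θ, -(1-θ)λ/μ_x], [(1-θ)θ²λ/μ_y, θ-(1-θ)²(1+θ)κ²]], κ = λ/√(μ_x μ_y), λ ≠ 0), for any θ ∈ ((√(1+κ²)-1)/|κ|, 1) the spectral radius satisfies ρ(A)² = θ² - θ(1-θ)²κ² < 1; specifically, ρ(A)² - 1 = -(1-θ)(1 + θ(1+κ²) - θ²κ²) < 0. -/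
open Matrix

lemma aux_quad (T D : ℝ) (c : ℂ) (h : c ^ 2 - (T : ℂ) * c + (D : ℂ) = 0)
    (hd : T ^ 2 < 4 * D) : ‖c‖ ^ 2 = D := by
  have hre := congrArg Complex.re h
  have him := congrArg Complex.im h
  simp [pow_two, Complex.mul_re, Complex.mul_im] at hre him
  have hnorm : ‖c‖ ^ 2 = c.re ^ 2 + c.im ^ 2 := by
    rw [Complex.sq_norm, Complex.normSq_apply]; ring
  rw [hnorm]
  rcases eq_or_ne c.im 0 with hb | hb
  · exfalso; rw [hb] at hre; nlinarith [sq_nonneg (2 * c.re - T)]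
  · have ha : 2 * c.re = T := by
      have : c.im * (2 * c.re - T) = 0 := by linarith [him]
      rcases mul_eq_zero.mp this with h' | h'
      · exact absurd h' hb
      · linarith
    have h2 : 2 * (c.re * c.re) = T * c.re := by rw [← ha]; ring
    nlinarith [hre, h2]

set_option maxHeartbeats 1600000 in
theorem stmt10 (θ l μx μy : ℝ) (hμx : 0 < μx) (hμy : 0 < μy) (hl : l ≠ 0)
    (κ : ℝ) (hκ : κ = l / Real.sqrt (μx * μy))
    (hθ1 : (Real.sqrt (1 + κ ^ 2) - 1) / |κ| < θ) (hθ2 : θ < 1) :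
    (∀ c ∈ spectrum ℂ
        ((!![θ, -(1 - θ) * l / μx;
            (1 - θ) * θ ^ 2 * l / μy, θ - (1 - θ) ^ 2 * (1 + θ) * κ ^ 2] :
          Matrix (Fin 2) (Fin 2) ℝ).map Complex.ofReal),
        ‖c‖ ^ 2 = θ ^ 2 - θ * (1 - θ) ^ 2 * κ ^ 2) ∧
    (θ ^ 2 - θ * (1 - θ) ^ 2 * κ ^ 2) - 1 =
      -(1 - θ) * (1 + θ * (1 + κ ^ 2) - θ ^ 2 * κ ^ 2) ∧
    θ ^ 2 - θ * (1 - θ) ^ 2 * κ ^ 2 < 1 := by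
  have hμ : (0:ℝ) < μx * μy := mul_pos hμx hμy
  have hκ2 : κ ^ 2 = l ^ 2 / (μx * μy) := by
    rw [hκ, div_pow, Real.sq_sqrt hμ.le]
  have hκ0 : κ ≠ 0 := by
    rw [hκ]
    exact div_ne_zero hl (Real.sqrt_ne_zero'.mpr hμ).symm.symm
  have hκpos : 0 < κ ^ 2 := by positivity
  have hk : 0 < |κ| := abs_pos.mpr hκ0
  have hsq : (1:ℝ) < Real.sqrt (1 + κ ^ 2) := by
    have h := Real.sq_sqrt (show (0:ℝ) ≤ 1 + κ ^ 2 by positivity)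
    nlinarith [Real.sqrt_nonneg (1 + κ ^ 2)]
  have hθ0 : 0 < θ := lt_trans (div_pos (by linarith) hk) hθ1
  have hkey : 0 < |κ| * (|κ| * θ ^ 2 + 2 * θ - |κ|) := by
    have h1 : Real.sqrt (1 + κ ^ 2) < |κ| * θ + 1 := by
      have := (div_lt_iff₀ hk).mp hθ1; linarith
    have h3 : 1 + κ ^ 2 < (|κ| * θ + 1) ^ 2 := by
      have := Real.sq_sqrt (show (0:ℝ) ≤ 1 + κ ^ 2 by positivity)
      nlinarith [Real.sqrt_nonneg (1 + κ ^ 2)]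
    nlinarith [sq_abs κ]
  have hA : 0 < |κ| * θ ^ 2 + 2 * θ - |κ| := by
    rcases mul_pos_iff.mp hkey with ⟨_, h⟩ | ⟨h, _⟩
    · exact h
    · linarith
  have hB : 0 < 2 * θ + (1 - θ ^ 2) * |κ| := by
    nlinarith [mul_pos (show (0:ℝ) < 1 - θ ^ 2 by nlinarith) hk]
  have hdisc : (θ + (θ - (1 - θ) ^ 2 * (1 + θ) * κ ^ 2)) ^ 2 <
      4 * (θ ^ 2 - θ * (1 - θ) ^ 2 * κ ^ 2) := by
    have hka : |κ| ^ 2 = κ ^ 2 := sq_abs κ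
    have hid : 4 * (θ ^ 2 - θ * (1 - θ) ^ 2 * κ ^ 2)
        - (θ + (θ - (1 - θ) ^ 2 * (1 + θ) * κ ^ 2)) ^ 2 =
        (1 - θ) ^ 2 * κ ^ 2 *
          ((2 * θ - (1 - θ ^ 2) * |κ|) * (2 * θ + (1 - θ ^ 2) * |κ|)) := by
      linear_combination ((1 - θ) ^ 2 * κ ^ 2 * (1 - θ ^ 2) ^ 2) * hka
    have hA' : 0 < 2 * θ - (1 - θ ^ 2) * |κ| := by nlinarith
    nlinarith [mul_pos (mul_pos hA' hB)
      (mul_pos (show (0:ℝ) < (1-θ)^2 by nlinarith) hκpos)]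
  refine ⟨?_, by ring, ?_⟩
  · intro c hc
    rw [spectrum.mem_iff, Matrix.isUnit_iff_isUnit_det, isUnit_iff_ne_zero, not_not,
      Matrix.det_fin_two] at hc
    simp [Matrix.algebraMap_eq_diagonal, Matrix.map_apply] at hc
    have hc2 : ((κ:ℂ)) ^ 2 * ((μx:ℂ) * (μy:ℂ)) = (l:ℂ) ^ 2 := by
      have h9 : κ ^ 2 * (μx * μy) = l ^ 2 := by
        rw [hκ2]; field_simp
      exact_mod_cast congrArg Complex.ofReal h9
    have hμx' : (μx:ℂ) ≠ 0 := by exact_mod_cast hμx.ne'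
    have hμy' : (μy:ℂ) ≠ 0 := by exact_mod_cast hμy.ne'
    have hident : c ^ 2 - ((θ + (θ - (1 - θ) ^ 2 * (1 + θ) * κ ^ 2) : ℝ) : ℂ) * c
        + ((θ ^ 2 - θ * (1 - θ) ^ 2 * κ ^ 2 : ℝ) : ℂ) =
        (c - (θ:ℂ)) * (c - ((θ:ℂ) - (1 - (θ:ℂ)) ^ 2 * (1 + (θ:ℂ)) * (κ:ℂ) ^ 2)) -
          ((θ:ℂ) - 1) * (l:ℂ) / (μx:ℂ) * ((1 - (θ:ℂ)) * (θ:ℂ) ^ 2 * (l:ℂ) / (μy:ℂ)) := by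
      push_cast
      field_simp
      linear_combination (-(1:ℂ) + θ)^2 * θ^2 * hc2
    exact aux_quad _ _ c (hident.trans hc) hdisc
  · nlinarith [mul_nonneg (mul_nonneg hθ0.le (sq_nonneg (1 - θ))) hκpos.le]
end
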